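/- Fix n ≥ 2. For each k ∈ ℕ let α_k := 2^{−nk}, 𝔻_k := {2^{−j} : 0 ≤ j ≤ k}, and 𝓡_k := { [0,s₁] × ⋯ × [0,s_{n−1}] × [0, α_k/(s₁·…·s_{n−1})] : s₁, …, s_{n−1} ∈ 𝔻_k }, and set 𝓡 := ⋃_{k∈ℕ} 𝓡_k. Then for each k ∈ ℕ there exist measurable sets Θ_k ⊆ Y_k ⊆ [0,1]^n with 0 < |Θ_k|, such that |Y_k| ≥ (1/(3·2^{n−2}))·2^{(n−1)k} k^{n−1} |Θ_k| and M_𝓡 χ_{Θ_k}(x) ≥ 2^{(1−n)k} for every x ∈ Y_k. -/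

import Mathlib

open MeasureTheory Set Filter
open scoped ENNReal

noncomputable section

/-- The standard rectangle `[0, α 0] × ⋯ × [0, α (n-1)]` in `ℝ^n`. -/
def stdRect (n : ℕ) (α : Fin n → ℝ) : Set (Fin n → ℝ) :=
  Set.univ.pi fun i => Set.Icc 0 (α i)

/-- A standard rectangle in `ℝ^n`: `[0,α₁]×⋯×[0,αₙ]` with `0 < αᵢ ≤ 1`. -/
def IsStandardRect {n : ℕ} (R : Set (Fin n → ℝ)) : Prop :=
  ∃ α : Fin n → ℝ, (∀ i, 0 < α i ∧ α i ≤ 1) ∧ R = stdRect n α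

/-- A standard dyadic rectangle in `ℝ^n`: each side is `2^{-mᵢ}` with `mᵢ ∈ ℕ`. -/
def IsStandardDyadicRect {n : ℕ} (R : Set (Fin n → ℝ)) : Prop :=
  ∃ m : Fin n → ℕ, R = stdRect n fun i => (2 : ℝ) ^ (-(m i : ℤ))

/-- The maximal operator associated to a family `𝓡` of rectangles, allowing all translates:
`M_𝓡 f (x) = sup { |R|⁻¹ ∫_{τ(R)} |f| : R ∈ 𝓡, τ translation, x ∈ τ(R) }`. -/
def maximalFn {n : ℕ} (𝓡 : Set (Set (Fin n → ℝ))) (f : (Fin n → ℝ) → ℝ)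
    (x : Fin n → ℝ) : ℝ≥0∞ :=
  ⨆ (R : Set (Fin n → ℝ)) (_ : R ∈ 𝓡) (v : Fin n → ℝ)
      (_ : x ∈ (fun y => v + y) '' R),
    (∫⁻ y in (fun y => v + y) '' R, ENNReal.ofReal |f y|) / volume R

/-- A family of sets has finite width if it is a finite union of subfamilies
each totally ordered by inclusion. -/
def FiniteWidth {β : Type*} (𝓕 : Set (Set β)) : Prop :=
  ∃ (N : ℕ) (c : Fin N → Set (Set β)),
    𝓕 = (⋃ i, c i) ∧ ∀ i, IsChain (· ⊆ ·) (c i)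

/-- An Orlicz function: convex, increasing on `[0,∞)`, vanishing at `0`. -/
def IsOrlicz (Φ : ℝ → ℝ) : Prop :=
  ConvexOn ℝ (Set.Ici 0) Φ ∧ MonotoneOn Φ (Set.Ici 0) ∧ Φ 0 = 0

/-- `Φ_d(t) = t (1 + log₊^d t)`. -/
def phiD (d : ℕ) (t : ℝ) : ℝ := t * (1 + max (Real.log t) 0 ^ d)

/-- `M_𝓡` satisfies a weak `L^Φ` inequality. -/
def WeakOrlicz {n : ℕ} (𝓡 : Set (Set (Fin n → ℝ))) (Φ : ℝ → ℝ) : Prop :=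
  ∃ C : ℝ, 0 < C ∧ ∀ f : (Fin n → ℝ) → ℝ, Measurable f →
    Integrable (fun x => Φ |f x|) → ∀ l : ℝ, 0 < l →
      volume {x | ENNReal.ofReal l < maximalFn 𝓡 f x} ≤
        ∫⁻ x, ENNReal.ofReal (Φ (C * |f x| / l))

/-- `M_𝓡` satisfies a weak `(1,1)` inequality. -/
def Weak11 {n : ℕ} (𝓡 : Set (Set (Fin n → ℝ))) : Prop :=
  ∃ C : ℝ, 0 < C ∧ ∀ f : (Fin n → ℝ) → ℝ, Measurable f → Integrable f →
    ∀ l : ℝ, 0 < l →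
      volume {x | ENNReal.ofReal l < maximalFn 𝓡 f x} ≤
        ENNReal.ofReal (C * (∫ x, |f x|) / l)

/-- `M_𝓡` satisfies a weak `L log^d L` inequality. -/
def WeakLLog {n : ℕ} (𝓡 : Set (Set (Fin n → ℝ))) (d : ℕ) : Prop :=
  ∃ c : ℝ, 0 < c ∧ ∀ f : (Fin n → ℝ) → ℝ, Measurable f → ∀ l : ℝ, 0 < l →
    volume {x | ENNReal.ofReal l < maximalFn 𝓡 f x} ≤
      ENNReal.ofReal c * ∫⁻ x, ENNReal.ofReal (phiD d (|f x| / l))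

/-- Projection onto the plane of coordinates `0` and `j`. -/
def planeProj {n : ℕ} (hn : 2 ≤ n) (j : Fin n) (x : Fin n → ℝ) : Fin 2 → ℝ :=
  ![x ⟨0, by omega⟩, x j]

/-- The family `𝓡_k = { [0,s₁]×⋯×[0,s_{n-1}]×[0, a/(s₁⋯s_{n-1})] : sᵢ ∈ 𝔻_k }`. -/
def guzmanFamily (n : ℕ) (hn : 2 ≤ n) (a : ℝ) (k : ℕ) : Set (Set (Fin n → ℝ)) :=
  { R | ∃ s : Fin n → ℝ,
      (∀ i : Fin n, (i : ℕ) < n - 1 → ∃ j : ℕ, j ≤ k ∧ s i = (2 : ℝ) ^ (-(j : ℤ))) ∧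
      s ⟨n - 1, by omega⟩ =
        a / ∏ i ∈ Finset.univ.filter (fun i : Fin n => (i : ℕ) < n - 1), s i ∧
      R = stdRect n s }

/-- The family `𝓡̃_k` in `ℝ^n`: rectangles
`[0,s₁]×⋯×[0,s_{n-2}]×[0, 2^{-(n-1)k}/(s₁⋯s_{n-2})]×[0,1]` with `sᵢ ∈ 𝔻_k`. -/
def exFamily (n : ℕ) (hn : 3 ≤ n) (k : ℕ) : Set (Set (Fin n → ℝ)) :=
  { R | ∃ s : Fin n → ℝ,
      (∀ i : Fin n, (i : ℕ) < n - 2 → ∃ j : ℕ, j ≤ k ∧ s i = (2 : ℝ) ^ (-(j : ℤ))) ∧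
      s ⟨n - 2, by omega⟩ = (2 : ℝ) ^ (-((n - 1) * k : ℤ)) /
        ∏ i ∈ Finset.univ.filter (fun i : Fin n => (i : ℕ) < n - 2), s i ∧
      s ⟨n - 1, by omega⟩ = 1 ∧
      R = stdRect n s }

/-- The hypothesis of Theorem `thm.stokn`: for every `k` there are a dyadic number
`α = 2^{-p} ≤ 2^{-k-1}` and strictly increasing dyadic numbers `0 < A i 0 < ⋯ < A i k ≤ 1`
(`i < n-1`) such that for every nonincreasing `J` with values `≤ k`,
the rectangle `(∏_{i<n-1} [0, A i (J i)]) × [0, 2^{-p}]` belongs to `𝓡`. -/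
def StokolosHyp (n : ℕ) (𝓡 : Set (Set (Fin n → ℝ))) : Prop :=
  ∀ k : ℕ, ∃ (p : ℕ) (A : ℕ → ℕ → ℝ),
    k + 1 ≤ p ∧
    (∀ i < n - 1, ∀ j ≤ k, ∃ m : ℕ, A i j = (2 : ℝ) ^ (-(m : ℤ))) ∧
    (∀ i < n - 1, ∀ j < k, A i j < A i (j + 1)) ∧
    (∀ i < n - 1, A i k ≤ 1) ∧
    ∀ J : ℕ → ℕ, (∀ l, J l ≤ k) → (∀ a b : ℕ, a ≤ b → J b ≤ J a) →
      stdRect n (fun i : Fin n =>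
        if (i : ℕ) < n - 1 then A (i : ℕ) (J (i : ℕ)) else (2 : ℝ) ^ (-(p : ℤ))) ∈ 𝓡

/-- For a chain `R_0 ≺ ⋯ ≺ R_k` with `R_j = ∏_l [0, α l j]`, the rectangle
`R^i_j = p_{1,…,i-1}(R_k) × p_{i,…,n}(R_j)` (here `i` is 0-indexed). -/
def hatRect (n : ℕ) (α : Fin n → ℕ → ℝ) (k : ℕ) (i : Fin n) (j : ℕ) :
    Set (Fin n → ℝ) :=
  { x | ∀ l : Fin n, ((l : ℕ) < (i : ℕ) → x l ∈ Set.Icc 0 (α l k)) ∧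
        ((i : ℕ) ≤ (l : ℕ) → x l ∈ Set.Icc 0 (α l j)) }

/-- Rademacher-type functions: `r 1 = χ_{ℤ+[0,1/2)}` and `r i (x) = r (i-1) (2x mod 1)`,
i.e. `r i (x) = 1` iff `fract (2^{i-1} x) < 1/2`. -/
def rademacher (i : ℕ) (x : ℝ) : ℝ :=
  if Int.fract ((2 : ℝ) ^ (i - 1) * x) < 1 / 2 then 1 else 0

/-- The set `Y_J ⊆ R₀` (here `J : ℕ → ℕ` carries the conventions `J 0 = k`, `J n = 0`;
coordinate `i` of `ℝ^n` is 0-indexed, corresponding to the paper's `i+1`). -/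
def Yset (n k : ℕ) (m : ℕ → ℕ → ℕ) (J : ℕ → ℕ) : Set (Fin n → ℝ) :=
  stdRect n (fun i => (2 : ℝ) ^ (-(m (i : ℕ) k : ℤ))) ∩
    { x | (∏ i : Fin n, ∏ μ ∈ Finset.Icc (J ((i : ℕ) + 1)) (J (i : ℕ)),
        rademacher (m (i : ℕ) μ) (x i)) = 1 }

/-- The set `E_{j₁,…,j_{r-1}}`: union of the `Y_J` over the `J` extending the given prefix
`j` on positions `1,…,r-1`, nonincreasing, with `J 0 = k` and `J n = 0`. -/
def Eset (n k r : ℕ) (m : ℕ → ℕ → ℕ) (j : ℕ → ℕ) : Set (Fin n → ℝ) :=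
  ⋃ J ∈ { J : ℕ → ℕ | J 0 = k ∧ J n = 0 ∧ (∀ a b : ℕ, a ≤ b → J b ≤ J a) ∧
      ∀ l, 1 ≤ l → l < r → J l = j l },
    Yset n k m J

/-! Let `Θ` be the box with sides `2^{-k}` in the first `n - 1` directions and `α_k` in the
last one. It lies in every rectangle `R_j ∈ 𝓡_k` with sides `2^{-j_i}` (`j_i ≤ k`) in the first
`n - 1` directions, and `|Θ| / |R_j| = 2^{-(n-1)k}`, so `M_𝓡 χ_Θ ≥ 2^{(1-n)k}` on
`Y = ⋃_j R_j`. The parts of the `R_j` where each of the first `n - 1` coordinates `x_i` lies in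
the dyadic shell `(2^{-j_i-1}, 2^{-j_i}]` are pairwise disjoint and have measure
`2^{1-n} α_k` each, so `|Y| ≥ (k+1)^{n-1} 2^{1-n} α_k`, which is more than required. -/

lemma volume_stdRect {n : ℕ} {α : Fin n → ℝ} (hα : ∀ i, 0 ≤ α i) :
    volume (stdRect n α) = ENNReal.ofReal (∏ i, α i) := by
  simp only [stdRect, volume_pi_pi, Real.volume_Icc, sub_zero]
  exact (ENNReal.ofReal_prod_of_nonneg fun i _ => hα i).symm

lemma stdRect_subset_unitCube {n : ℕ} {α : Fin n → ℝ} (hα : ∀ i, α i ≤ 1) :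
    stdRect n α ⊆ univ.pi fun _ => Icc (0 : ℝ) 1 :=
  pi_mono fun i _ => Icc_subset_Icc_right (hα i)

lemma measure_div_le_maximalFn_indicator {n : ℕ} {𝓡 : Set (Set (Fin n → ℝ))}
    {R Θ : Set (Fin n → ℝ)} {x : Fin n → ℝ} (hR : R ∈ 𝓡) (hx : x ∈ R)
    (hΘ : MeasurableSet Θ) (hΘR : Θ ⊆ R) :
    volume Θ / volume R ≤ maximalFn 𝓡 (Θ.indicator fun _ => 1) x := by
  have hR0 : (fun y => (0 : Fin n → ℝ) + y) '' R = R := by simp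
  refine le_iSup₂_of_le R hR <| le_iSup₂_of_le 0 (by rwa [hR0]) (le_of_eq ?_)
  have hind : (fun y => ENNReal.ofReal |Θ.indicator (fun _ => (1 : ℝ)) y|) =
      Θ.indicator 1 := by
    ext y; by_cases hy : y ∈ Θ <;> simp [hy]
  rw [hR0, hind, lintegral_indicator_one hΘ, Measure.restrict_apply hΘ,
    inter_eq_self_of_subset_left hΘR]

def initialCoords (n : ℕ) : Finset (Fin n) := {i : Fin n | (i : ℕ) < n - 1}

lemma mem_initialCoords {n : ℕ} {i : Fin n} : i ∈ initialCoords n ↔ (i : ℕ) < n - 1 := by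
  simp [initialCoords]

lemma card_initialCoords (n : ℕ) : (initialCoords n).card = n - 1 := by
  rw [initialCoords, Fin.card_filter_val_lt]; omega

lemma prod_eq_prod_initialCoords_mul {M : Type*} [CommMonoid M] {n : ℕ} (hn : 1 ≤ n)
    (f : Fin n → M) : ∏ i, f i = (∏ i ∈ initialCoords n, f i) * f ⟨n - 1, by omega⟩ := by
  have hlast : ({i : Fin n | ¬ (i : ℕ) < n - 1} : Finset (Fin n)) = {⟨n - 1, by omega⟩} := by
    ext i; simp [Fin.ext_iff]; omega
  rw [← Finset.prod_filter_mul_prod_filter_not Finset.univ fun i : Fin n => (i : ℕ) < n - 1,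
    hlast, Finset.prod_singleton]
  rfl

def dyadicShell (l : ℕ) : Set ℝ := Ioc ((2 : ℝ) ^ (-(l : ℤ)) / 2) ((2 : ℝ) ^ (-(l : ℤ)))

lemma dyadicShell_subset_Icc (l : ℕ) : dyadicShell l ⊆ Icc 0 ((2 : ℝ) ^ (-(l : ℤ))) :=
  fun _ hx => ⟨(by positivity : (0 : ℝ) ≤ _).trans hx.1.le, hx.2⟩

lemma volume_dyadicShell (l : ℕ) :
    volume (dyadicShell l) = ENNReal.ofReal ((2 : ℝ) ^ (-(l : ℤ)) / 2) := by
  rw [dyadicShell, Real.volume_Ioc]; ring_nf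

lemma dyadicShell_disjoint {l l' : ℕ} (h : l ≠ l') : Disjoint (dyadicShell l) (dyadicShell l') := by
  wlog hlt : l < l' generalizing l l'
  · exact (this h.symm (by omega)).symm
  have : (2 : ℝ) ^ (-(l' : ℤ)) ≤ (2 : ℝ) ^ (-(l : ℤ)) / 2 := by
    rw [div_eq_mul_inv, ← zpow_sub_one₀ two_ne_zero]
    exact zpow_le_zpow_right₀ one_le_two (by omega)
  exact disjoint_left.2 fun x hx hx' => (hx'.2.trans this).not_gt hx.1

section guzmanRect

variable {n k : ℕ} {a : ℝ}

def dyadicProd (n : ℕ) (j : Fin n → ℕ) : ℝ := ∏ i ∈ initialCoords n, (2 : ℝ) ^ (-(j i : ℤ))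

lemma dyadicProd_pos (j : Fin n → ℕ) : 0 < dyadicProd n j :=
  Finset.prod_pos fun _ _ => by positivity

lemma dyadicProd_le_one (j : Fin n → ℕ) : dyadicProd n j ≤ 1 :=
  Finset.prod_le_one (fun _ _ => by positivity)
    fun _ _ => zpow_le_one_of_nonpos₀ one_le_two (by omega)

lemma pow_le_dyadicProd {j : Fin n → ℕ} (hj : ∀ i : Fin n, (i : ℕ) < n - 1 → j i ≤ k) :
    ((2 : ℝ) ^ (-(k : ℤ))) ^ (n - 1) ≤ dyadicProd n j := by
  rw [← card_initialCoords n, ← Finset.prod_const]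
  refine Finset.prod_le_prod (fun _ _ => by positivity) fun i hi => ?_
  exact zpow_le_zpow_right₀ one_le_two (by have := hj i (mem_initialCoords.1 hi); omega)

def guzmanSides (n : ℕ) (a : ℝ) (j : Fin n → ℕ) : Fin n → ℝ := fun i =>
  if (i : ℕ) < n - 1 then (2 : ℝ) ^ (-(j i : ℤ)) else a / dyadicProd n j

def guzmanRect (n : ℕ) (a : ℝ) (j : Fin n → ℕ) : Set (Fin n → ℝ) :=
  stdRect n (guzmanSides n a j)

lemma prod_initialCoords_guzmanSides (j : Fin n → ℕ) :
    ∏ i ∈ initialCoords n, guzmanSides n a j i = dyadicProd n j :=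
  Finset.prod_congr rfl fun _ hi => if_pos (mem_initialCoords.1 hi)

lemma guzmanSides_last (hn : 1 ≤ n) (j : Fin n → ℕ) :
    guzmanSides n a j ⟨n - 1, by omega⟩ = a / dyadicProd n j :=
  if_neg (lt_irrefl _)

lemma guzmanRect_mem_guzmanFamily (hn : 2 ≤ n) {j : Fin n → ℕ}
    (hj : ∀ i : Fin n, (i : ℕ) < n - 1 → j i ≤ k) : guzmanRect n a j ∈ guzmanFamily n hn a k :=
  ⟨guzmanSides n a j, fun i hi => ⟨j i, hj i hi, if_pos hi⟩,
    (guzmanSides_last (by omega) j).trans (by rw [← prod_initialCoords_guzmanSides]; rfl), rfl⟩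

lemma volume_guzmanRect (hn : 1 ≤ n) (ha : 0 ≤ a) (j : Fin n → ℕ) :
    volume (guzmanRect n a j) = ENNReal.ofReal a := by
  have hP := dyadicProd_pos j
  have hsides : ∀ i, 0 ≤ guzmanSides n a j i := fun i => by
    unfold guzmanSides; split_ifs <;> positivity
  rw [guzmanRect, volume_stdRect hsides, prod_eq_prod_initialCoords_mul hn,
    prod_initialCoords_guzmanSides, guzmanSides_last hn, mul_div_cancel₀ _ hP.ne']

lemma guzmanSides_le_one (hak : a ≤ ((2 : ℝ) ^ (-(k : ℤ))) ^ (n - 1))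
    {j : Fin n → ℕ} (hj : ∀ i : Fin n, (i : ℕ) < n - 1 → j i ≤ k) (i : Fin n) :
    guzmanSides n a j i ≤ 1 := by
  unfold guzmanSides
  split_ifs
  · exact zpow_le_one_of_nonpos₀ one_le_two (by omega)
  · rw [div_le_one (dyadicProd_pos j)]
    exact hak.trans (pow_le_dyadicProd hj)

end guzmanRect

lemma two_zpow_neg_mul (m k : ℕ) : (2 : ℝ) ^ (-((m : ℤ) * k)) = ((2 : ℝ) ^ (-(k : ℤ))) ^ m := by
  rw [← zpow_natCast, ← zpow_mul]; ring_nf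

lemma testSets_volume_ratio {n k : ℕ} (hn : 2 ≤ n) {a : ℝ} (ha : 0 ≤ a) :
    1 / (3 * 2 ^ (n - 2)) * (2 : ℝ) ^ ((n - 1) * k) * (k : ℝ) ^ (n - 1) *
        (((2 : ℝ) ^ (-(k : ℤ))) ^ (n - 1) * a) ≤
      (k + 1 : ℝ) ^ (n - 1) * (a / 2 ^ (n - 1)) := by
  obtain ⟨d, rfl⟩ : ∃ d, n = d + 2 := ⟨n - 2, by omega⟩
  have hcancel : (2 : ℝ) ^ ((d + 1) * k) * ((2 : ℝ) ^ (-(k : ℤ))) ^ (d + 1) = 1 := by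
    rw [← two_zpow_neg_mul, ← zpow_natCast, ← zpow_add₀ two_ne_zero]; push_cast; ring_nf; simp
  have hpow : (k : ℝ) ^ (d + 1) ≤ (k + 1 : ℝ) ^ (d + 1) := by gcongr; linarith
  simp only [Nat.add_sub_cancel, show d + 2 - 1 = d + 1 by omega]
  calc 1 / (3 * 2 ^ d) * (2 : ℝ) ^ ((d + 1) * k) * (k : ℝ) ^ (d + 1) *
        (((2 : ℝ) ^ (-(k : ℤ))) ^ (d + 1) * a)
      = (k : ℝ) ^ (d + 1) * a / (3 * 2 ^ d) := by
        linear_combination (k : ℝ) ^ (d + 1) * a / (3 * 2 ^ d) * hcancel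
    _ ≤ (k + 1 : ℝ) ^ (d + 1) * a / (2 * 2 ^ d) := by
        gcongr ?_ / ?_
        · exact mul_le_mul_of_nonneg_right hpow ha
        · norm_num
    _ = (k + 1 : ℝ) ^ (d + 1) * (a / 2 ^ (d + 1)) := by ring

section testSets

variable {n k : ℕ} {a : ℝ}

def coreRect (n k : ℕ) (a : ℝ) : Set (Fin n → ℝ) :=
  stdRect n fun i => if (i : ℕ) < n - 1 then (2 : ℝ) ^ (-(k : ℤ)) else a

lemma measurableSet_coreRect : MeasurableSet (coreRect n k a) :=
  MeasurableSet.univ_pi fun _ => measurableSet_Icc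

lemma volume_coreRect (hn : 1 ≤ n) (ha : 0 ≤ a) :
    volume (coreRect n k a) = ENNReal.ofReal (((2 : ℝ) ^ (-(k : ℤ))) ^ (n - 1) * a) := by
  rw [coreRect, volume_stdRect fun i => by split_ifs <;> positivity,
    prod_eq_prod_initialCoords_mul hn, if_neg (lt_irrefl _),
    Finset.prod_congr rfl fun i hi => if_pos (mem_initialCoords.1 hi), Finset.prod_const,
    card_initialCoords]

lemma coreRect_subset_guzmanRect (ha : 0 ≤ a) {j : Fin n → ℕ}
    (hj : ∀ i : Fin n, (i : ℕ) < n - 1 → j i ≤ k) : coreRect n k a ⊆ guzmanRect n a j := by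
  refine pi_mono fun i _ => Icc_subset_Icc_right ?_
  dsimp only [guzmanSides]
  split_ifs with hi
  · exact zpow_le_zpow_right₀ one_le_two (by have := hj i hi; omega)
  · exact le_div_self ha (dyadicProd_pos j) (dyadicProd_le_one j)

lemma volume_coreRect_div_volume_guzmanRect (hn : 1 ≤ n) (ha : 0 < a) (j : Fin n → ℕ) :
    volume (coreRect n k a) / volume (guzmanRect n a j) =
      ENNReal.ofReal (((2 : ℝ) ^ (-(k : ℤ))) ^ (n - 1)) := by
  rw [volume_coreRect hn ha.le, volume_guzmanRect hn ha.le, ← ENNReal.ofReal_div_of_pos ha,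
    mul_div_cancel_right₀ _ ha.ne']

def shellBox (n : ℕ) (a : ℝ) (j : Fin n → ℕ) : Set (Fin n → ℝ) :=
  univ.pi fun i =>
    if (i : ℕ) < n - 1 then dyadicShell (j i) else Icc 0 (guzmanSides n a j i)

lemma shellBox_subset_guzmanRect (j : Fin n → ℕ) : shellBox n a j ⊆ guzmanRect n a j := by
  refine pi_mono fun i _ => ?_
  split_ifs with hi
  · simpa only [guzmanSides, if_pos hi] using dyadicShell_subset_Icc (j i)
  · exact subset_rfl

lemma measurableSet_shellBox (j : Fin n → ℕ) : MeasurableSet (shellBox n a j) :=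
  MeasurableSet.univ_pi fun i => by
    split_ifs
    exacts [measurableSet_Ioc, measurableSet_Icc]

lemma volume_shellBox (hn : 1 ≤ n) (j : Fin n → ℕ) :
    volume (shellBox n a j) = ENNReal.ofReal (a / 2 ^ (n - 1)) := by
  have hP := dyadicProd_pos j
  rw [shellBox, volume_pi_pi, prod_eq_prod_initialCoords_mul hn, if_neg (lt_irrefl _),
    Real.volume_Icc, sub_zero, guzmanSides_last hn,
    Finset.prod_congr rfl fun i hi => by rw [if_pos (mem_initialCoords.1 hi), volume_dyadicShell],
    ← ENNReal.ofReal_prod_of_nonneg fun _ _ => by positivity,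
    ← ENNReal.ofReal_mul (by positivity), Finset.prod_div_distrib, Finset.prod_const,
    card_initialCoords]
  congr 1
  rw [dyadicProd] at hP ⊢
  field_simp

def levels (n k : ℕ) : Finset (Fin n → ℕ) :=
  Fintype.piFinset fun i => if (i : ℕ) < n - 1 then Finset.range (k + 1) else {0}

lemma le_of_mem_levels {j : Fin n → ℕ} (hj : j ∈ levels n k) (i : Fin n) (hi : (i : ℕ) < n - 1) :
    j i ≤ k := by
  have := Fintype.mem_piFinset.1 hj i
  rw [if_pos hi, Finset.mem_range] at this
  omega

lemma eq_zero_of_mem_levels {j : Fin n → ℕ} (hj : j ∈ levels n k) (i : Fin n)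
    (hi : ¬ (i : ℕ) < n - 1) : j i = 0 := by
  simpa [if_neg hi] using Fintype.mem_piFinset.1 hj i

lemma zero_mem_levels : (0 : Fin n → ℕ) ∈ levels n k :=
  Fintype.mem_piFinset.2 fun i => by split_ifs <;> simp

lemma card_levels (hn : 1 ≤ n) : (levels n k).card = (k + 1) ^ (n - 1) := by
  rw [levels, Fintype.card_piFinset, prod_eq_prod_initialCoords_mul hn, if_neg (lt_irrefl _),
    Finset.prod_congr rfl fun i hi => by rw [if_pos (mem_initialCoords.1 hi)],
    Finset.prod_const, card_initialCoords]
  simp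

lemma pairwiseDisjoint_shellBox :
    (levels n k : Set (Fin n → ℕ)).PairwiseDisjoint (shellBox n a) := by
  intro j hj j' hj' hne
  obtain ⟨i, hi⟩ := Function.ne_iff.1 hne
  have hinit : (i : ℕ) < n - 1 := by
    by_contra h
    exact hi ((eq_zero_of_mem_levels hj i h).trans (eq_zero_of_mem_levels hj' i h).symm)
  refine disjoint_left.2 fun x hx hx' => ?_
  have hxi : x i ∈ dyadicShell (j i) := by simpa [if_pos hinit] using hx i (mem_univ i)
  have hxi' : x i ∈ dyadicShell (j' i) := by simpa [if_pos hinit] using hx' i (mem_univ i)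
  exact disjoint_left.1 (dyadicShell_disjoint hi) hxi hxi'

lemma volume_biUnion_shellBox (hn : 1 ≤ n) :
    volume (⋃ j ∈ levels n k, shellBox n a j) =
      ((k + 1) ^ (n - 1) : ℕ) * ENNReal.ofReal (a / 2 ^ (n - 1)) := by
  rw [measure_biUnion_finset pairwiseDisjoint_shellBox fun j _ => measurableSet_shellBox j,
    Finset.sum_congr rfl fun j _ => volume_shellBox hn j, Finset.sum_const, card_levels hn,
    nsmul_eq_mul]

lemma le_maximalFn_indicator_coreRect (hn : 1 ≤ n) (ha : 0 < a) {𝓡 : Set (Set (Fin n → ℝ))}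
    (h𝓡 : ∀ j ∈ levels n k, guzmanRect n a j ∈ 𝓡) {x : Fin n → ℝ}
    (hx : x ∈ ⋃ j ∈ levels n k, guzmanRect n a j) :
    ENNReal.ofReal (((2 : ℝ) ^ (-(k : ℤ))) ^ (n - 1)) ≤
      maximalFn 𝓡 ((coreRect n k a).indicator fun _ => 1) x := by
  obtain ⟨j, hj, hxj⟩ := mem_iUnion₂.1 hx
  rw [← volume_coreRect_div_volume_guzmanRect hn ha j]
  exact measure_div_le_maximalFn_indicator (h𝓡 j hj) hxj measurableSet_coreRect
    (coreRect_subset_guzmanRect ha.le (le_of_mem_levels hj))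

lemma ofReal_mul_volume_coreRect_le (hn : 2 ≤ n) (ha : 0 ≤ a) :
    ENNReal.ofReal (1 / (3 * 2 ^ (n - 2)) * (2 : ℝ) ^ ((n - 1) * k) * (k : ℝ) ^ (n - 1)) *
        volume (coreRect n k a) ≤ volume (⋃ j ∈ levels n k, guzmanRect n a j) :=
  calc _ = ENNReal.ofReal (1 / (3 * 2 ^ (n - 2)) * (2 : ℝ) ^ ((n - 1) * k) * (k : ℝ) ^ (n - 1) *
          (((2 : ℝ) ^ (-(k : ℤ))) ^ (n - 1) * a)) := by
        rw [volume_coreRect (by omega) ha, ← ENNReal.ofReal_mul (by positivity)]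
    _ ≤ ENNReal.ofReal ((k + 1 : ℝ) ^ (n - 1) * (a / 2 ^ (n - 1))) :=
        ENNReal.ofReal_le_ofReal (testSets_volume_ratio hn ha)
    _ = volume (⋃ j ∈ levels n k, shellBox n a j) := by
        rw [volume_biUnion_shellBox (by omega), ENNReal.ofReal_mul (by positivity)]
        norm_cast
    _ ≤ _ := measure_mono (biUnion_mono subset_rfl fun j _ => shellBox_subset_guzmanRect j)

end testSets

/-- Lemma `lem.stokn2`. For `𝓡 = ⋃_k 𝓡_k` with `α_k = 2^{-nk}`, for each
`k` there are sets `Θ_k ⊆ Y_k ⊆ [0,1]^n` with `|Y_k| ≥ (1/(3·2^{n-2})) 2^{(n-1)k} k^{n-1} |Θ_k|`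
and `M_𝓡 χ_{Θ_k} ≥ 2^{(1-n)k}` on `Y_k`. -/
theorem testSets_for_guzmanFamily (n : ℕ) (hn : 2 ≤ n) (k : ℕ) :
    ∃ Θ Y : Set (Fin n → ℝ), MeasurableSet Θ ∧ MeasurableSet Y ∧
      Θ ⊆ Y ∧ Y ⊆ Set.univ.pi (fun _ : Fin n => Set.Icc (0 : ℝ) 1) ∧
      0 < volume Θ ∧
      ENNReal.ofReal (1 / (3 * 2 ^ (n - 2)) * (2 : ℝ) ^ ((n - 1) * k) * (k : ℝ) ^ (n - 1)) *
          volume Θ ≤ volume Y ∧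
      ∀ x ∈ Y, ENNReal.ofReal ((2 : ℝ) ^ ((1 - (n : ℤ)) * k)) ≤
        maximalFn (⋃ k' : ℕ, guzmanFamily n hn ((2 : ℝ) ^ (-((n : ℤ) * k'))) k')
          (Θ.indicator fun _ => (1 : ℝ)) x := by
  have hn1 : 1 ≤ n := by omega
  set a : ℝ := (2 : ℝ) ^ (-((n : ℤ) * k))
  have ha : 0 < a := by positivity
  have hak : a ≤ ((2 : ℝ) ^ (-(k : ℤ))) ^ (n - 1) := by
    rw [show a = _ from two_zpow_neg_mul n k]
    exact pow_le_pow_of_le_one (by positivity) (zpow_le_one_of_nonpos₀ one_le_two (by omega))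
      (by omega)
  have hexp : (2 : ℝ) ^ ((1 - (n : ℤ)) * k) = ((2 : ℝ) ^ (-(k : ℤ))) ^ (n - 1) := by
    rw [← two_zpow_neg_mul]; push_cast [Nat.cast_sub hn1]; ring_nf
  refine ⟨coreRect n k a, ⋃ j ∈ levels n k, guzmanRect n a j, measurableSet_coreRect,
    Finset.measurableSet_biUnion _ fun j _ => MeasurableSet.univ_pi fun _ => measurableSet_Icc,
    (coreRect_subset_guzmanRect ha.le fun _ _ => Nat.zero_le k).trans
      (subset_biUnion_of_mem (u := guzmanRect n a) zero_mem_levels),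
    iUnion₂_subset fun j hj => stdRect_subset_unitCube
      (guzmanSides_le_one hak (le_of_mem_levels hj)),
    by rw [volume_coreRect hn1 ha.le]; exact ENNReal.ofReal_pos.2 (by positivity),
    ofReal_mul_volume_coreRect_le hn ha.le, fun x hx => ?_⟩
  rw [hexp]
  refine le_maximalFn_indicator_coreRect hn1 ha (fun j hj => ?_) hx
  exact mem_iUnion.2 ⟨k, guzmanRect_mem_guzmanFamily hn (le_of_mem_levels hj)⟩

end
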